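/- Let α ≥ 3 be a finite number and p ≥ 3 odd. Let U_0 be a set equipped with an equivalence relation E each of whose equivalence classes has exactly p elements, let R = E − Id_{U_0}, and let V_1, …, V_{α−2} be finite sets each of cardinality p − 1; write R × T for the set of α-tuples (a, b, t_1, …, t_{α−2}) with (a,b) ∈ R and t_i ∈ V_i for 1 ≤ i ≤ α−2. Then there exist p − 2 pairwise disjoint sets K_0, …, K_{p−3} whose union is R × T, such that: (q0) for every j < p−2, every tuple s ∈ R × T, and every coordinate position i < α, some tuple obtained from s by changing only its i-th coordinate lies in K_j; (k1) for every j < p−2 and all a, b, t_1, …, t_{α−2}: (a,b,t_1,…,t_{α−2}) ∈ K_j if and only if (b,a,t_1,…,t_{α−2}) ∈ K_j. -/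
import Mathlib


def Hfun (p x y : ℕ) : ℕ :=
  if (x + y) % p ≤ p - 3 then (x + y) % p
  else if (x + y) % p = p - 1 then
    (if (2 * x) % p % 2 = 0 then (2 * x) % p else (2 * y) % p)
  else if (2 * x) % p = p - 1 ∨ (2 * y) % p = p - 1 then p - 3
  else (if (2 * x) % p % 2 = 1 then (2 * x) % p else (2 * y) % p)



lemma mod_two_cases {a p : ℕ} (h0 : 0 < p) (h : a < 2 * p) :
    (a % p = a ∨ a % p + p = a) ∧ a % p < p := by
  refine ⟨?_, Nat.mod_lt _ h0⟩
  rcases Nat.lt_or_ge a p with h1 | h1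
  · exact Or.inl (Nat.mod_eq_of_lt h1)
  · right
    rw [Nat.mod_eq_sub_mod h1, Nat.mod_eq_of_lt (by omega)]
    omega

lemma Hsym {p x y : ℕ} (hp : 3 ≤ p) (hodd : p % 2 = 1) (hx : x < p) (hy : y < p)
    (hne : x ≠ y) : Hfun p x y = Hfun p y x := by
  have ha := mod_two_cases (a := 2 * x) (p := p) (by omega) (by omega)
  have hb := mod_two_cases (a := 2 * y) (p := p) (by omega) (by omega)
  have hc := mod_two_cases (a := x + y) (p := p) (by omega) (by omega)
  have hc' := mod_two_cases (a := y + x) (p := p) (by omega) (by omega)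
  unfold Hfun
  split_ifs <;> omega

lemma Hlt {p x y : ℕ} (hp : 3 ≤ p) (hodd : p % 2 = 1) (hx : x < p) (hy : y < p)
    (hne : x ≠ y) : Hfun p x y < p - 2 := by
  have ha := mod_two_cases (a := 2 * x) (p := p) (by omega) (by omega)
  have hb := mod_two_cases (a := 2 * y) (p := p) (by omega) (by omega)
  have hc := mod_two_cases (a := x + y) (p := p) (by omega) (by omega)
  unfold Hfun
  split_ifs <;> omega

lemma Hcover {p y : ℕ} (hp : 3 ≤ p) (hodd : p % 2 = 1) (hy : y < p)
    (j : ℕ) (hj : j < p - 2) : ∃ x, x < p ∧ x ≠ y ∧ Hfun p x y = j := by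
  have hb := mod_two_cases (a := 2 * y) (p := p) (by omega) (by omega)
  by_cases hjv : j = (2 * y) % p
  · -- patched cases
    by_cases hpar : j % 2 = 0
    · -- even: use x = p - 1 - y, sum = p - 1
      refine ⟨p - 1 - y, by omega, by omega, ?_⟩
      have ha := mod_two_cases (a := 2 * (p - 1 - y)) (p := p) (by omega) (by omega)
      have hc := mod_two_cases (a := p - 1 - y + y) (p := p) (by omega) (by omega)
      unfold Hfun
      split_ifs <;> omega
    · -- odd: use x ≡ p - 2 - y
      have hx := mod_two_cases (a := 2 * p - 2 - y) (p := p) (by omega) (by omega)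
      refine ⟨(2 * p - 2 - y) % p, by omega, by omega, ?_⟩
      set x := (2 * p - 2 - y) % p with hxdef
      have ha := mod_two_cases (a := 2 * x) (p := p) (by omega) (by omega)
      have hc := mod_two_cases (a := x + y) (p := p) (by omega) (by omega)
      unfold Hfun
      split_ifs <;> omega
  · -- normal case: x ≡ j - y (mod p)
    have hx := mod_two_cases (a := j + p - y) (p := p) (by omega) (by omega)
    refine ⟨(j + p - y) % p, by omega, by omega, ?_⟩
    set x := (j + p - y) % p with hxdef
    have ha := mod_two_cases (a := 2 * x) (p := p) (by omega) (by omega)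
    have hc := mod_two_cases (a := x + y) (p := p) (by omega) (by omega)
    unfold Hfun
    split_ifs <;> omega

lemma exists_target {q : ℕ} (A j : ℕ) (hj : j < q) :
    ∃ r, r < q ∧ (A + r) % q = j := by
  have hA : A % q < q := Nat.mod_lt _ (by omega)
  have h1 := mod_two_cases (a := j + q - A % q) (p := q) (by omega) (by omega)
  refine ⟨(j + q - A % q) % q, by omega, ?_⟩
  set r := (j + q - A % q) % q with hr
  have h2 := mod_two_cases (a := A % q + r) (p := q) (by omega) (by omega)
  rw [Nat.add_mod, Nat.mod_eq_of_lt (show r < q by omega)]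
  omega



lemma exists_bijOn_of_ncard {U : Type*} {S : Set U} {n : ℕ} (hfin : S.Finite)
    (hcard : S.ncard = n) : ∃ f : U → ℕ, Set.BijOn f S (Set.Iio n) := by
  haveI := hfin.fintype
  have hc : Fintype.card S = n := by
    rw [← hcard, Set.ncard_eq_toFinset_card']
    simp [Set.toFinset_card]
  obtain ⟨e⟩ : Nonempty (S ≃ Fin n) := ⟨Fintype.equivFinOfCardEq hc⟩
  classical
  refine ⟨fun u => if h : u ∈ S then (e ⟨u, h⟩ : ℕ) else 0, ?_, ?_, ?_⟩
  · intro u hu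
    simp only [dif_pos hu, Set.mem_Iio]
    exact (e ⟨u, hu⟩).isLt
  · intro u hu v hv huv
    simp only [dif_pos hu, dif_pos hv] at huv
    have : e ⟨u, hu⟩ = e ⟨v, hv⟩ := Fin.ext huv
    simpa using congrArg (fun z => (e.symm z : U)) this
  · intro k hk
    simp only [Set.mem_Iio] at hk
    refine ⟨e.symm ⟨k, hk⟩, (e.symm ⟨k, hk⟩).2, ?_⟩
    simp only [dif_pos (e.symm ⟨k, hk⟩).2]
    simp

lemma exists_label {U : Type*} (p : ℕ) (hp : 3 ≤ p) (U0 : Set U) (E : Set (U × U))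
    (hrefl : ∀ a ∈ U0, (a, a) ∈ E)
    (hsymm : ∀ a b, (a, b) ∈ E → (b, a) ∈ E)
    (htrans : ∀ a b c, (a, b) ∈ E → (b, c) ∈ E → (a, c) ∈ E)
    (hclass : ∀ a ∈ U0, Set.ncard {b | (a, b) ∈ E} = p) :
    ∃ ℓ : U → ℕ, ∀ a ∈ U0, Set.BijOn ℓ {b | (a, b) ∈ E} (Set.Iio p) := by
  classical
  set F : Set U → U → ℕ := fun S u =>
    if h : (∃ f : U → ℕ, Set.BijOn f S (Set.Iio p)) then Classical.choose h u else 0 with hF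
  refine ⟨fun u => F {c | (u, c) ∈ E} u, ?_⟩
  intro a ha
  have hCeq : ∀ b ∈ {c | (a, c) ∈ E}, {c | (b, c) ∈ E} = {c | (a, c) ∈ E} := by
    intro b hb
    ext c
    exact ⟨fun h => htrans _ _ _ hb h, fun h => htrans _ _ _ (hsymm _ _ hb) h⟩
  have hfin : {c | (a, c) ∈ E}.Finite :=
    Set.finite_of_ncard_ne_zero (by rw [hclass a ha]; omega)
  have hPa : ∃ f : U → ℕ, Set.BijOn f {c | (a, c) ∈ E} (Set.Iio p) :=
    exists_bijOn_of_ncard hfin (hclass a ha)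
  have heq : Set.EqOn (fun u => F {c | (u, c) ∈ E} u) (Classical.choose hPa)
      {c | (a, c) ∈ E} := by
    intro b hb
    show F {c | (b, c) ∈ E} b = Classical.choose hPa b
    rw [hCeq b hb]
    simp only [hF]
    rw [dif_pos hPa]
  exact (Classical.choose_spec hPa).congr heq.symm

lemma exists_glabel {U : Type*} (p α : ℕ) (hp : 3 ≤ p) (V : ℕ → Set U)
    (hVfin : ∀ j, 1 ≤ j → j ≤ α - 2 → (V j).Finite)
    (hV : ∀ j, 1 ≤ j → j ≤ α - 2 → Set.ncard (V j) = p - 1) :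
    ∃ g : ℕ → U → ℕ, ∀ i, 1 ≤ i → i ≤ α - 2 →
      Set.SurjOn (g i) (V i) (Set.Iio (p - 2)) := by
  classical
  refine ⟨fun i => if h : ∃ f : U → ℕ, Set.SurjOn f (V i) (Set.Iio (p - 2))
      then Classical.choose h else fun _ => 0, ?_⟩
  intro i hi1 hi2
  have hex : ∃ f : U → ℕ, Set.SurjOn f (V i) (Set.Iio (p - 2)) := by
    obtain ⟨f, hf⟩ := exists_bijOn_of_ncard (hVfin i hi1 hi2) (hV i hi1 hi2)
    refine ⟨fun u => min (f u) (p - 3), ?_⟩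
    intro k hk
    simp only [Set.mem_Iio] at hk
    obtain ⟨u, hu, hfu⟩ := hf.surjOn (Set.mem_Iio.mpr (show k < p - 1 by omega))
    exact ⟨u, hu, by simp only [hfu]; omega⟩
  simpa only [dif_pos hex] using Classical.choose_spec hex


/-- Let `α ≥ 3`, `p ≥ 3` odd, `E` an equivalence relation on `U₀ ⊆ U` all of whose classes
have exactly `p` elements, `R = E − Id`, and `V_1, …, V_{α−2}` sets of cardinality `p − 1`.
Writing `R × T` for the set of `α`-tuples `(a, b, t₁, …, t_{α−2})` with `(a,b) ∈ R` and
`tᵢ ∈ Vᵢ`, there is a partition of `R × T` into `p − 2` pairwise disjoint sets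
`K_0, …, K_{p−3}` that are big (q0) and symmetric in the first two coordinates (k1). -/
theorem exists_K_symmetric_partition {U : Type*} (α p : ℕ) (hα : 3 ≤ α) (hp : 3 ≤ p)
    (hodd : Odd p)
    (U0 : Set U) (V : ℕ → Set U) (E : Set (U × U))
    (hEsub : ∀ a b, (a, b) ∈ E → a ∈ U0 ∧ b ∈ U0)
    (hrefl : ∀ a ∈ U0, (a, a) ∈ E)
    (hsymm : ∀ a b, (a, b) ∈ E → (b, a) ∈ E)
    (htrans : ∀ a b c, (a, b) ∈ E → (b, c) ∈ E → (a, c) ∈ E)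
    (hclass : ∀ a ∈ U0, Set.ncard {b | (a, b) ∈ E} = p)
    (hVfin : ∀ j, 1 ≤ j → j ≤ α - 2 → (V j).Finite)
    (hV : ∀ j, 1 ≤ j → j ≤ α - 2 → Set.ncard (V j) = p - 1) :
    ∀ RT : Set (Fin α → U),
      RT = {s : Fin α → U |
              (s ⟨0, by omega⟩, s ⟨1, by omega⟩) ∈ E ∧
              s ⟨0, by omega⟩ ≠ s ⟨1, by omega⟩ ∧
              ∀ i : Fin α, 2 ≤ (i : ℕ) → s i ∈ V ((i : ℕ) - 1)} →
      ∃ K : ℕ → Set (Fin α → U),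
        (∀ k < p - 2, ∀ j < p - 2, k ≠ j → K k ∩ K j = ∅) ∧
        (⋃ k ∈ Finset.range (p - 2), K k) = RT ∧
        (∀ j < p - 2, ∀ s ∈ RT, ∀ i : Fin α, ∃ u : U, Function.update s i u ∈ K j) ∧
        (∀ j < p - 2, ∀ s : Fin α → U,
          s ∈ K j ↔ s ∘ (Equiv.swap (⟨0, by omega⟩ : Fin α) ⟨1, by omega⟩) ∈ K j) := by
  classical
  have hp2 : p % 2 = 1 := Nat.odd_iff.mp hodd
  intro RT hRT
  subst hRT
  obtain ⟨ℓ, hℓ⟩ := exists_label p hp U0 E hrefl hsymm htrans hclass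
  obtain ⟨g, hg⟩ := exists_glabel p α hp V hVfin hV
  set i0 : Fin α := ⟨0, by omega⟩ with hi0
  set i1 : Fin α := ⟨1, by omega⟩ with hi1
  have hi0v : (i0 : ℕ) = 0 := rfl
  have hi1v : (i1 : ℕ) = 1 := rfl
  have hne01 : i0 ≠ i1 := Fin.ne_of_val_ne (by omega)
  set RT : Set (Fin α → U) := {s : Fin α → U |
      (s i0, s i1) ∈ E ∧ s i0 ≠ s i1 ∧
      ∀ i : Fin α, 2 ≤ (i : ℕ) → s i ∈ V ((i : ℕ) - 1)} with hRTdef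
  have hmem : ∀ t : Fin α → U, t ∈ RT ↔
      ((t i0, t i1) ∈ E ∧ t i0 ≠ t i1 ∧
        ∀ i : Fin α, 2 ≤ (i : ℕ) → t i ∈ V ((i : ℕ) - 1)) := fun t => Iff.rfl
  set T : Finset (Fin α) := Finset.univ.filter (fun i : Fin α => 2 ≤ (i : ℕ)) with hT
  have hTmem : ∀ x : Fin α, x ∈ T ↔ 2 ≤ (x : ℕ) := by
    intro x; simp [hT]
  set cf : (Fin α → U) → ℕ :=
    fun s => (Hfun p (ℓ (s i0)) (ℓ (s i1)) + ∑ x ∈ T, g ((x : ℕ) - 1) (s x)) % (p - 2)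
    with hcf
  have hcflt : ∀ s, cf s < p - 2 := fun s => Nat.mod_lt _ (by omega)
  have hkey : ∀ t ∈ RT, ℓ (t i0) < p ∧ ℓ (t i1) < p ∧ ℓ (t i0) ≠ ℓ (t i1) ∧
      t i0 ∈ U0 ∧ t i1 ∈ U0 := by
    intro t ht
    obtain ⟨hE, hnet, -⟩ := (hmem t).mp ht
    obtain ⟨h0, h1⟩ := hEsub _ _ hE
    have B := hℓ (t i0) h0
    have m0 : t i0 ∈ {b | (t i0, b) ∈ E} := hrefl _ h0
    have m1 : t i1 ∈ {b | (t i0, b) ∈ E} := hE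
    exact ⟨Set.mem_Iio.mp (B.mapsTo m0), Set.mem_Iio.mp (B.mapsTo m1),
      fun h => hnet (B.injOn m0 m1 h), h0, h1⟩
  refine ⟨fun j => {t | t ∈ RT ∧ cf t = j}, ?_, ?_, ?_, ?_⟩
  · -- disjointness
    intro k hk j hj hkj
    ext s
    simp only [Set.mem_inter_iff, Set.mem_setOf_eq, Set.mem_empty_iff_false, iff_false]
    rintro ⟨⟨-, h1⟩, ⟨-, h2⟩⟩
    exact hkj (h1 ▸ h2 ▸ rfl)
  · -- union
    ext s
    simp only [Set.mem_iUnion, Finset.mem_range, Set.mem_setOf_eq, exists_prop]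
    exact ⟨fun ⟨k, _, hs, _⟩ => hs, fun hs => ⟨cf s, hcflt s, hs, rfl⟩⟩
  · -- q0
    intro j hj s hs i
    obtain ⟨hE, hnes, hVs⟩ := (hmem s).mp hs
    obtain ⟨hl0, hl1, hlne, hU0s, hU1s⟩ := hkey s hs
    rcases Nat.lt_or_ge (i : ℕ) 2 with hilt | hige
    · -- i = i0 or i = i1
      rcases Nat.lt_or_ge (i : ℕ) 1 with hi0c | hi1c
      · -- i = i0
        have hii : i = i0 := Fin.ext (by omega)
        subst hii
        obtain ⟨r, hr, hmod⟩ :=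
          exists_target (q := p - 2) (∑ x ∈ T, g ((x : ℕ) - 1) (s x)) j hj
        obtain ⟨x', hx'p, hx'ne, hx'H⟩ := Hcover hp hp2 hl1 r hr
        obtain ⟨a', ha'E, ha'ℓ⟩ := (hℓ (s i1) hU1s).surjOn (Set.mem_Iio.mpr hx'p)
        refine ⟨a', ?_, ?_⟩
        · -- membership in RT
          refine (hmem _).mpr ⟨?_, ?_, ?_⟩
          · rw [Function.update_self, Function.update_of_ne hne01.symm]
            exact hsymm _ _ ha'E
          · rw [Function.update_self, Function.update_of_ne hne01.symm]
            intro h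
            exact hx'ne (by rw [← ha'ℓ, h])
          · intro x hx
            rw [Function.update_of_ne (Fin.ne_of_val_ne (by omega))]
            exact hVs x hx
        · -- color
          simp only [hcf]
          rw [Function.update_self, Function.update_of_ne hne01.symm]
          have hsum : ∑ x ∈ T, g ((x : ℕ) - 1) (Function.update s i0 a' x)
              = ∑ x ∈ T, g ((x : ℕ) - 1) (s x) := by
            refine Finset.sum_congr rfl fun x hx => ?_
            rw [Function.update_of_ne (Fin.ne_of_val_ne (by
              have := (hTmem x).mp hx; omega))]
          rw [hsum, ha'ℓ, hx'H, Nat.add_comm]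
          exact hmod
      · -- i = i1
        have hii : i = i1 := Fin.ext (by omega)
        subst hii
        obtain ⟨r, hr, hmod⟩ :=
          exists_target (q := p - 2) (∑ x ∈ T, g ((x : ℕ) - 1) (s x)) j hj
        obtain ⟨x', hx'p, hx'ne, hx'H⟩ := Hcover hp hp2 hl0 r hr
        obtain ⟨b', hb'E, hb'ℓ⟩ := (hℓ (s i0) hU0s).surjOn (Set.mem_Iio.mpr hx'p)
        refine ⟨b', ?_, ?_⟩
        · refine (hmem _).mpr ⟨?_, ?_, ?_⟩
          · rw [Function.update_self, Function.update_of_ne hne01]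
            exact hb'E
          · rw [Function.update_self, Function.update_of_ne hne01]
            intro h
            exact hx'ne (by rw [← hb'ℓ, ← h])
          · intro x hx
            rw [Function.update_of_ne (Fin.ne_of_val_ne (by omega))]
            exact hVs x hx
        · simp only [hcf]
          rw [Function.update_self, Function.update_of_ne hne01]
          have hsum : ∑ x ∈ T, g ((x : ℕ) - 1) (Function.update s i1 b' x)
              = ∑ x ∈ T, g ((x : ℕ) - 1) (s x) := by
            refine Finset.sum_congr rfl fun x hx => ?_
            rw [Function.update_of_ne (Fin.ne_of_val_ne (by
              have := (hTmem x).mp hx; omega))]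
          rw [hsum, hb'ℓ, Hsym hp hp2 hl0 hx'p (fun h => hx'ne h.symm) , hx'H, Nat.add_comm]
          exact hmod
    · -- 2 ≤ i
      have hiT : i ∈ T := (hTmem i).mpr hige
      obtain ⟨r, hr, hmod⟩ := exists_target (q := p - 2)
        (Hfun p (ℓ (s i0)) (ℓ (s i1)) + ∑ x ∈ T.erase i, g ((x : ℕ) - 1) (s x)) j hj
      have hia : (i : ℕ) - 1 ≤ α - 2 := by have := i.isLt; omega
      obtain ⟨t, htV, hgt⟩ := hg ((i : ℕ) - 1) (by omega) hia (Set.mem_Iio.mpr hr)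
      refine ⟨t, ?_, ?_⟩
      · refine (hmem _).mpr ⟨?_, ?_, ?_⟩
        · rw [Function.update_of_ne (Fin.ne_of_val_ne (by omega)),
            Function.update_of_ne (Fin.ne_of_val_ne (by omega))]
          exact hE
        · rw [Function.update_of_ne (Fin.ne_of_val_ne (by omega)),
            Function.update_of_ne (Fin.ne_of_val_ne (by omega))]
          exact hnes
        · intro x hx
          rcases eq_or_ne x i with hxi | hxi
          · subst hxi
            rw [Function.update_self]
            exact htV
          · rw [Function.update_of_ne hxi]
            exact hVs x hx
      · simp only [hcf]
        rw [Function.update_of_ne (Fin.ne_of_val_ne (by omega)),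
          Function.update_of_ne (Fin.ne_of_val_ne (by omega))]
        have hsplit : ∑ x ∈ T, g ((x : ℕ) - 1) (Function.update s i t x)
            = g ((i : ℕ) - 1) t + ∑ x ∈ T.erase i, g ((x : ℕ) - 1) (s x) := by
          rw [← Finset.add_sum_erase T _ hiT, Function.update_self]
          congr 1
          refine Finset.sum_congr rfl fun x hx => ?_
          rw [Function.update_of_ne (Finset.ne_of_mem_erase hx)]
        rw [hsplit, hgt]
        rw [show Hfun p (ℓ (s i0)) (ℓ (s i1)) +
            (r + ∑ x ∈ T.erase i, g ((x : ℕ) - 1) (s x)) =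
            (Hfun p (ℓ (s i0)) (ℓ (s i1)) +
              ∑ x ∈ T.erase i, g ((x : ℕ) - 1) (s x)) + r by omega]
        exact hmod
  · -- k1 symmetry
    intro j hj s
    set σ : Equiv.Perm (Fin α) := Equiv.swap i0 i1 with hσ
    have hs0 : ∀ t : Fin α → U, (t ∘ σ) i0 = t i1 := by
      intro t; simp [hσ, Equiv.swap_apply_left]
    have hs1 : ∀ t : Fin α → U, (t ∘ σ) i1 = t i0 := by
      intro t; simp [hσ, Equiv.swap_apply_right]
    have hsx : ∀ (t : Fin α → U) (x : Fin α), 2 ≤ (x : ℕ) → (t ∘ σ) x = t x := by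
      intro t x hx
      simp only [Function.comp_apply, hσ]
      rw [Equiv.swap_apply_of_ne_of_ne (Fin.ne_of_val_ne (by omega))
        (Fin.ne_of_val_ne (by omega))]
    have hswapRT : ∀ t : Fin α → U, t ∈ RT → t ∘ σ ∈ RT := by
      intro t ht
      obtain ⟨hE, hnet, hVt⟩ := (hmem t).mp ht
      refine (hmem _).mpr ⟨?_, ?_, ?_⟩
      · rw [hs0, hs1]; exact hsymm _ _ hE
      · rw [hs0, hs1]; exact hnet.symm
      · intro x hx
        rw [hsx t x hx]
        exact hVt x hx
    have hinv : ∀ t : Fin α → U, (t ∘ σ) ∘ σ = t := by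
      intro t; funext x
      simp [hσ, Equiv.swap_apply_self]
    have hcfswap : ∀ t : Fin α → U, t ∈ RT → cf (t ∘ σ) = cf t := by
      intro t ht
      obtain ⟨hl0, hl1, hlne, -, -⟩ := hkey t ht
      simp only [hcf]
      rw [hs0, hs1]
      have hsum : ∑ x ∈ T, g ((x : ℕ) - 1) ((t ∘ σ) x)
          = ∑ x ∈ T, g ((x : ℕ) - 1) (t x) :=
        Finset.sum_congr rfl fun x hx => by rw [hsx t x ((hTmem x).mp hx)]
      rw [hsum, Hsym hp hp2 hl1 hl0 (fun h => hlne h.symm)]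
    constructor
    · rintro ⟨ht, hc⟩
      exact ⟨hswapRT s ht, by rw [hcfswap s ht, hc]⟩
    · rintro ⟨ht, hc⟩
      have hsRT : s ∈ RT := by
        have := hswapRT _ ht
        rwa [hinv] at this
      refine ⟨hsRT, ?_⟩
      rw [← hcfswap s hsRT]
      exact hc
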